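/- Let p and d₀ be positive integers with d₀ ≤ p, let A₀ ∈ 𝒜_{p×d₀}, and let Σ̂ be a real symmetric p×p matrix. Let Â ∈ 𝒜_{p×d₀} be a matrix whose columns are orthonormal eigenvectors of Σ̂ corresponding to its d₀ largest eigenvalues (counted with multiplicity). Then d_F(𝒮(Â), 𝒮(A₀)) ≤ 2 d₀^{1/2} ‖Σ̂ − A₀ A₀ᵀ‖_op. -/

import Mathlib

open Matrix

/-- Squared Frobenius norm of a real matrix. -/
noncomputable def frobSq {m n : ℕ} (M : Matrix (Fin m) (Fin n) ℝ) : ℝ :=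
  ∑ i, ∑ j, (M i j) ^ 2

/-- The distance `d_F(𝒮(Â), 𝒮(A))`, defined by `d_F² = (1/2) ‖Â Âᵀ − A Aᵀ‖_F²`. -/
noncomputable def dF {p d dhat : ℕ} (Ahat : Matrix (Fin p) (Fin dhat) ℝ)
    (A : Matrix (Fin p) (Fin d) ℝ) : ℝ :=
  Real.sqrt ((1 / 2) * frobSq (Ahat * Ahatᵀ - A * Aᵀ))

/-- The ℓ²→ℓ² operator norm (spectral norm) of a real square matrix. -/
noncomputable def opNorm {p : ℕ} (M : Matrix (Fin p) (Fin p) ℝ) : ℝ :=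
  ‖LinearMap.toContinuousLinearMap (Matrix.toEuclideanLin M)‖

lemma euc_norm_eq {p : ℕ} (x : Fin p → ℝ) :
    ‖(WithLp.equiv 2 (Fin p → ℝ)).symm x‖ = Real.sqrt (∑ i, (x i)^2) := by
  rw [EuclideanSpace.norm_eq]
  congr 1
  apply Finset.sum_congr rfl
  intro i _
  rw [WithLp.equiv_symm_apply, PiLp.toLp_apply, Real.norm_eq_abs, sq_abs]

lemma mulVec_norm_le {p : ℕ} (M : Matrix (Fin p) (Fin p) ℝ) (x : Fin p → ℝ) :
    Real.sqrt (∑ i, (M.mulVec x i)^2) ≤ opNorm M * Real.sqrt (∑ i, (x i)^2) := by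
  have h := (LinearMap.toContinuousLinearMap (Matrix.toEuclideanLin M)).le_opNorm
      ((WithLp.equiv 2 (Fin p → ℝ)).symm x)
  have he : (LinearMap.toContinuousLinearMap (Matrix.toEuclideanLin M))
      ((WithLp.equiv 2 (Fin p → ℝ)).symm x) = Matrix.toEuclideanLin M
      ((WithLp.equiv 2 (Fin p → ℝ)).symm x) := rfl
  rw [he, WithLp.equiv_symm_apply, Matrix.toEuclideanLin_apply_piLp_toLp, ← WithLp.equiv_symm_apply, euc_norm_eq, euc_norm_eq] at h
  exact h

lemma mulVec_sq_le {p : ℕ} (M : Matrix (Fin p) (Fin p) ℝ) (x : Fin p → ℝ) :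
    ∑ i, (M.mulVec x i)^2 ≤ (opNorm M)^2 * ∑ i, (x i)^2 := by
  have h := mulVec_norm_le M x
  have h1 : (0:ℝ) ≤ ∑ i, (M.mulVec x i)^2 := Finset.sum_nonneg fun i _ => sq_nonneg _
  have h2 : (0:ℝ) ≤ ∑ i, (x i)^2 := Finset.sum_nonneg fun i _ => sq_nonneg _
  calc ∑ i, (M.mulVec x i)^2 = (Real.sqrt (∑ i, (M.mulVec x i)^2))^2 := (Real.sq_sqrt h1).symm
    _ ≤ (opNorm M * Real.sqrt (∑ i, (x i)^2))^2 := by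
        apply pow_le_pow_left₀ (Real.sqrt_nonneg _) h
    _ = (opNorm M)^2 * ∑ i, (x i)^2 := by rw [mul_pow, Real.sq_sqrt h2]

lemma inner_mulVec_le {p : ℕ} (M : Matrix (Fin p) (Fin p) ℝ) (x : Fin p → ℝ) :
    |∑ i, x i * M.mulVec x i| ≤ opNorm M * ∑ i, (x i)^2 := by
  have h := abs_real_inner_le_norm ((WithLp.equiv 2 (Fin p → ℝ)).symm x)
      ((WithLp.equiv 2 (Fin p → ℝ)).symm (M.mulVec x))
  have hinner : (inner ℝ ((WithLp.equiv 2 (Fin p → ℝ)).symm x)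
      ((WithLp.equiv 2 (Fin p → ℝ)).symm (M.mulVec x)) : ℝ) = ∑ i, x i * M.mulVec x i := by
    rw [PiLp.inner_apply]
    apply Finset.sum_congr rfl
    intro i _
    rw [WithLp.equiv_symm_apply, PiLp.toLp_apply, PiLp.toLp_apply, RCLike.inner_apply, conj_trivial, mul_comm]
  rw [hinner, euc_norm_eq, euc_norm_eq] at h
  have hn := mulVec_norm_le M x
  calc |∑ i, x i * M.mulVec x i| ≤ Real.sqrt (∑ i, (x i)^2) * Real.sqrt (∑ i, (M.mulVec x i)^2) := h
    _ ≤ Real.sqrt (∑ i, (x i)^2) * (opNorm M * Real.sqrt (∑ i, (x i)^2)) :=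
        mul_le_mul_of_nonneg_left hn (Real.sqrt_nonneg _)
    _ = opNorm M * ∑ i, (x i)^2 := by
        rw [← mul_assoc, mul_comm _ (opNorm M), mul_assoc, Real.mul_self_sqrt
          (Finset.sum_nonneg fun i _ => sq_nonneg _)]

lemma frobSq_eq_trace {m n : ℕ} (M : Matrix (Fin m) (Fin n) ℝ) :
    frobSq M = Matrix.trace (Mᵀ * M) := by
  unfold frobSq
  rw [Matrix.trace, Finset.sum_comm]
  apply Finset.sum_congr rfl
  intro j _
  rw [Matrix.diag_apply, Matrix.mul_apply]
  apply Finset.sum_congr rfl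
  intro i _
  rw [Matrix.transpose_apply, sq]

lemma half_frob {p d : ℕ} (A B : Matrix (Fin p) (Fin d) ℝ)
    (hA : Aᵀ * A = 1) (hB : Bᵀ * B = 1) :
    (1/2) * frobSq (B * Bᵀ - A * Aᵀ) = frobSq (A - B * (Bᵀ * A)) := by
  have hBB : ∀ (n : Type) (X : Matrix (Fin d) n ℝ), Bᵀ * (B * X) = X := fun n X => by
    rw [← Matrix.mul_assoc, hB, Matrix.one_mul]
  have hAA : ∀ (n : Type) (X : Matrix (Fin d) n ℝ), Aᵀ * (A * X) = X := fun n X => by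
    rw [← Matrix.mul_assoc, hA, Matrix.one_mul]
  rw [frobSq_eq_trace, frobSq_eq_trace]
  have e1 : (B * Bᵀ - A * Aᵀ)ᵀ * (B * Bᵀ - A * Aᵀ)
      = B * Bᵀ - B * (Bᵀ * (A * Aᵀ)) - A * (Aᵀ * (B * Bᵀ)) + A * Aᵀ := by
    rw [transpose_sub, transpose_mul, transpose_mul, transpose_transpose, transpose_transpose,
      Matrix.sub_mul, Matrix.mul_sub, Matrix.mul_sub]
    simp only [Matrix.mul_assoc, hBB, hAA]
    abel
  have e2 : (A - B * (Bᵀ * A))ᵀ * (A - B * (Bᵀ * A)) = 1 - Aᵀ * (B * (Bᵀ * A)) := by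
    rw [transpose_sub, transpose_mul, transpose_mul, transpose_transpose,
      Matrix.sub_mul, Matrix.mul_sub, Matrix.mul_sub, hA]
    simp only [Matrix.mul_assoc, hBB]
    abel
  rw [e1, e2]
  rw [Matrix.trace_add, Matrix.trace_sub, Matrix.trace_sub, Matrix.trace_sub]
  have t1 : Matrix.trace (B * Bᵀ) = (d:ℝ) := by
    rw [Matrix.trace_mul_comm, hB, Matrix.trace_one]; simp
  have t2 : Matrix.trace (A * Aᵀ) = (d:ℝ) := by
    rw [Matrix.trace_mul_comm, hA, Matrix.trace_one]; simp
  have t3 : Matrix.trace (B * (Bᵀ * (A * Aᵀ))) = Matrix.trace (Aᵀ * (B * (Bᵀ * A))) := by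
    rw [show B * (Bᵀ * (A * Aᵀ)) = (B * (Bᵀ * A)) * Aᵀ by simp only [Matrix.mul_assoc],
      Matrix.trace_mul_comm]
  have t4 : Matrix.trace (A * (Aᵀ * (B * Bᵀ))) = Matrix.trace (Aᵀ * (B * (Bᵀ * A))) := by
    rw [show A * (Aᵀ * (B * Bᵀ)) = (A * (Aᵀ * B)) * Bᵀ by simp only [Matrix.mul_assoc],
      Matrix.trace_mul_comm,
      show Bᵀ * (A * (Aᵀ * B)) = (Bᵀ * A) * (Aᵀ * B) by simp only [Matrix.mul_assoc],
      Matrix.trace_mul_comm,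
      show (Aᵀ * B) * (Bᵀ * A) = Aᵀ * (B * (Bᵀ * A)) by simp only [Matrix.mul_assoc]]
  rw [t1, t2, t3, t4, Matrix.trace_one]
  simp
  ring

lemma swap_dot' {p m : ℕ} (x : Fin p → ℝ) (w : Fin m → ℝ) (M : Matrix (Fin p) (Fin m) ℝ) :
    ∑ k, x k * ∑ j, M k j * w j = ∑ j, (∑ k, M k j * x k) * w j := by
  simp_rw [Finset.mul_sum, Finset.sum_mul]
  rw [Finset.sum_comm]
  apply Finset.sum_congr rfl; intro k _
  apply Finset.sum_congr rfl; intro j _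
  ring

lemma frob_triangle {m n : ℕ} (C D : Matrix (Fin m) (Fin n) ℝ) :
    Real.sqrt (frobSq (C - D)) ≤ Real.sqrt (frobSq C) + Real.sqrt (frobSq D) := by
  have key : ∀ (M : Matrix (Fin m) (Fin n) ℝ),
      Real.sqrt (frobSq M)
        = ‖(WithLp.equiv 2 (Fin m × Fin n → ℝ)).symm (fun q => M q.1 q.2)‖ := by
    intro M
    rw [EuclideanSpace.norm_eq]
    congr 1
    show ∑ i, ∑ j, (M i j)^2 = _
    rw [Fintype.sum_prod_type]
    apply Finset.sum_congr rfl; intro i _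
    apply Finset.sum_congr rfl; intro j _
    rw [WithLp.equiv_symm_apply, PiLp.toLp_apply, Real.norm_eq_abs, sq_abs]
  rw [key, key, key]
  have h : (WithLp.equiv 2 (Fin m × Fin n → ℝ)).symm (fun q => (C - D) q.1 q.2)
      = (WithLp.equiv 2 (Fin m × Fin n → ℝ)).symm (fun q => C q.1 q.2)
        - (WithLp.equiv 2 (Fin m × Fin n → ℝ)).symm (fun q => D q.1 q.2) := by
    rw [WithLp.equiv_symm_apply, ← WithLp.toLp_sub]
    rfl
  rw [h]
  exact norm_sub_le _ _

lemma orth_pres {p d : ℕ} (V : Matrix (Fin p) (Fin d) ℝ) (hV : Vᵀ * V = 1) (y : Fin d → ℝ) :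
    ∑ k, ((V *ᵥ y) k)^2 = ∑ j, (y j)^2 := by
  have h1 : ∀ k, ((V *ᵥ y) k)^2 = (V *ᵥ y) k * ∑ j, V k j * y j := fun k => by rw [sq]; rfl
  simp_rw [h1]
  rw [swap_dot' (V *ᵥ y) y V]
  apply Finset.sum_congr rfl; intro j _
  have h2 : ∑ k, V k j * (V *ᵥ y) k = (Vᵀ *ᵥ (V *ᵥ y)) j := rfl
  rw [h2, Matrix.mulVec_mulVec, hV, Matrix.one_mulVec, sq]

lemma contraction {p d : ℕ} (Ahat : Matrix (Fin p) (Fin d) ℝ) (hhat : Ahatᵀ * Ahat = 1)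
    (x : Fin p → ℝ) :
    ∑ i, (((1 - Ahat * Ahatᵀ) *ᵥ x) i)^2 ≤ ∑ i, (x i)^2 := by
  have hx : (1 - Ahat * Ahatᵀ) *ᵥ x = x - Ahat *ᵥ (Ahatᵀ *ᵥ x) := by
    rw [Matrix.sub_mulVec, Matrix.one_mulVec, Matrix.mulVec_mulVec]
  set y := Ahatᵀ *ᵥ x with hy
  have s1 : ∑ i, x i * (Ahat *ᵥ y) i = ∑ j, (y j)^2 := by
    have h1 : ∀ i, x i * (Ahat *ᵥ y) i = x i * ∑ j, Ahat i j * y j := fun i => rfl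
    simp_rw [h1]
    rw [swap_dot' x y Ahat]
    apply Finset.sum_congr rfl; intro j _
    have h2 : ∑ k, Ahat k j * x k = (Ahatᵀ *ᵥ x) j := rfl
    rw [h2, sq]
  have s2 : ∑ i, ((Ahat *ᵥ y) i)^2 = ∑ j, (y j)^2 := orth_pres Ahat hhat y
  have hexp : ∀ i, ((x - Ahat *ᵥ y) i)^2
      = (x i)^2 - 2*(x i * (Ahat *ᵥ y) i) + ((Ahat *ᵥ y) i)^2 := by
    intro i; rw [Pi.sub_apply]; ring
  rw [hx]
  simp_rw [hexp]
  rw [Finset.sum_add_distrib, Finset.sum_sub_distrib, ← Finset.mul_sum, s1, s2]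
  have : (0:ℝ) ≤ ∑ j, (y j)^2 := Finset.sum_nonneg fun j _ => sq_nonneg _
  linarith

lemma sum_fin_lt {p d₀ : ℕ} (hdp : d₀ ≤ p) (h : Fin p → ℝ) :
    ∑ m : Fin p, (if (m:ℕ) < d₀ then h m else 0) = ∑ j : Fin d₀, h (Fin.castLE hdp j) := by
  have hmap : (Finset.univ.map ⟨Fin.castLE hdp, Fin.castLE_injective hdp⟩ : Finset (Fin p))
      = Finset.univ.filter (fun m : Fin p => (m:ℕ) < d₀) := by
    ext m
    simp only [Finset.mem_map, Finset.mem_univ, true_and, Finset.mem_filter,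
      Function.Embedding.coeFn_mk]
    constructor
    · rintro ⟨j, rfl⟩; exact j.isLt
    · intro hm; exact ⟨⟨(m:ℕ), hm⟩, rfl⟩
  rw [Finset.sum_ite, Finset.sum_const_zero, add_zero, ← hmap, Finset.sum_map]
  simp

lemma swap_dot {p m : ℕ} (x : Fin p → ℝ) (w : Fin m → ℝ) (M : Matrix (Fin p) (Fin m) ℝ) :
    ∑ k, x k * ∑ j, M k j * w j = ∑ j, (∑ k, M k j * x k) * w j := by
  simp_rw [Finset.mul_sum, Finset.sum_mul]
  rw [Finset.sum_comm]
  apply Finset.sum_congr rfl; intro k _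
  apply Finset.sum_congr rfl; intro j _
  ring

section Ulemmas
variable {p : ℕ} (U : Matrix (Fin p) (Fin p) ℝ) (lam : Fin p → ℝ)
  (Shat : Matrix (Fin p) (Fin p) ℝ)

lemma dotcol (hU : Uᵀ * U = 1) (i j : Fin p) :
    ∑ k, U k i * U k j = if i = j then (1:ℝ) else 0 := by
  have h := congrFun (congrFun hU i) j
  rw [Matrix.mul_apply] at h
  simp only [Matrix.transpose_apply] at h
  rw [h, Matrix.one_apply]

lemma eigencol (hU : Uᵀ * U = 1) (hdecomp : Shat = U * Matrix.diagonal lam * Uᵀ) (i : Fin p) :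
    Shat *ᵥ (fun k => U k i) = fun k => lam i * U k i := by
  rw [hdecomp, ← Matrix.mulVec_mulVec, ← Matrix.mulVec_mulVec]
  have h1 : Uᵀ *ᵥ (fun k => U k i) = fun j => if j = i then (1:ℝ) else 0 := by
    funext j
    show ∑ k, Uᵀ j k * U k i = _
    simp only [Matrix.transpose_apply]
    rw [dotcol U hU j i]
  rw [h1]
  have h2 : (Matrix.diagonal lam *ᵥ fun j => if j = i then (1:ℝ) else 0)
      = fun j => if j = i then lam i else 0 := by
    funext j
    rw [Matrix.mulVec_diagonal]
    by_cases h : j = i <;> simp [h]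
  rw [h2]
  funext k
  show ∑ j, U k j * (if j = i then lam i else 0) = lam i * U k i
  rw [Finset.sum_eq_single i]
  · simp [mul_comm]
  · intro b _ hb; simp [hb]
  · intro h; exact absurd (Finset.mem_univ i) h

end Ulemmas

lemma quad_proj {p d : ℕ} (A : Matrix (Fin p) (Fin d) ℝ) (x : Fin p → ℝ) :
    ∑ k, x k * ((A * Aᵀ) *ᵥ x) k = ∑ j, ((Aᵀ *ᵥ x) j)^2 := by
  rw [← Matrix.mulVec_mulVec]
  have h : ∀ k, ((A *ᵥ (Aᵀ *ᵥ x)) k) = ∑ j, A k j * (Aᵀ *ᵥ x) j := fun k => rfl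
  simp_rw [h]
  rw [swap_dot]
  apply Finset.sum_congr rfl; intro j _
  have : (Aᵀ *ᵥ x) j = ∑ k, A k j * x k := by
    show ∑ k, Aᵀ j k * x k = _
    simp [Matrix.transpose_apply]
  rw [← this, sq]

lemma lam_d0_le {p d₀ : ℕ} (hdp' : d₀ < p)
    (A₀ : Matrix (Fin p) (Fin d₀) ℝ)
    (Shat : Matrix (Fin p) (Fin p) ℝ)
    (U : Matrix (Fin p) (Fin p) ℝ) (lam : Fin p → ℝ)
    (hU : Uᵀ * U = 1) (hlam : Antitone lam)
    (hdecomp : Shat = U * Matrix.diagonal lam * Uᵀ) :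
    lam ⟨d₀, hdp'⟩ ≤ opNorm (Shat - A₀ * A₀ᵀ) := by
  set E := Shat - A₀ * A₀ᵀ with hE
  set ε := opNorm E with hε
  set g : Fin (d₀+1) → Fin p := Fin.castLE hdp' with hg
  have hginj : Function.Injective g := Fin.castLE_injective hdp'
  set f : Fin (d₀+1) → (Fin p → ℝ) := fun j => fun k => U k (g j) with hf
  -- key dot computation
  have sumdot : ∀ (c : Fin (d₀+1) → ℝ) (j₀ : Fin (d₀+1)),
      ∑ k, (∑ j, c j * U k (g j)) * U k (g j₀) = c j₀ := by
    intro c j₀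
    simp_rw [Finset.sum_mul]
    rw [Finset.sum_comm]
    have : ∀ j, ∑ k, c j * U k (g j) * U k (g j₀) = c j * (if g j = g j₀ then (1:ℝ) else 0) := by
      intro j
      rw [← dotcol U hU (g j) (g j₀), Finset.mul_sum]
      apply Finset.sum_congr rfl; intro k _; ring
    simp_rw [this]
    rw [Finset.sum_eq_single j₀]
    · simp
    · intro b _ hb
      rw [if_neg (fun h => hb (hginj h)), mul_zero]
    · intro h; exact absurd (Finset.mem_univ j₀) h
  -- linear independence
  have hli : LinearIndependent ℝ f := by
    rw [Fintype.linearIndependent_iff]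
    intro c hc j₀
    have h2 := congrFun hc
    have h3 : ∀ k, (∑ j, c j * U k (g j)) = 0 := by
      intro k
      have := h2 k
      rw [Finset.sum_apply] at this
      simpa [hf] using this
    have h4 := sumdot c j₀
    simp_rw [h3, zero_mul, Finset.sum_const_zero] at h4
    exact h4.symm
  set W1 : Submodule ℝ (Fin p → ℝ) := Submodule.span ℝ (Set.range f) with hW1
  have hfin1 : Module.finrank ℝ W1 = d₀ + 1 := by
    rw [hW1, finrank_span_eq_card hli, Fintype.card_fin]
  set T := Matrix.mulVecLin A₀ᵀ with hT
  set W2 := LinearMap.ker T with hW2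
  have hrank := LinearMap.finrank_range_add_finrank_ker T
  rw [Module.finrank_fintype_fun_eq_card, Fintype.card_fin] at hrank
  have hrle : Module.finrank ℝ (LinearMap.range T) ≤ d₀ := by
    have := Submodule.finrank_le (LinearMap.range T)
    rwa [Module.finrank_fintype_fun_eq_card, Fintype.card_fin] at this
  have hsupinf := Submodule.finrank_sup_add_finrank_inf_eq W1 W2
  have hsup : Module.finrank ℝ ↥(W1 ⊔ W2) ≤ p := by
    have := Submodule.finrank_le (W1 ⊔ W2)
    rwa [Module.finrank_fintype_fun_eq_card, Fintype.card_fin] at this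
  have hker_eq : Module.finrank ℝ ↥(LinearMap.ker T) = Module.finrank ℝ ↥W2 := rfl
  rw [hker_eq] at hrank
  have hinf : 0 < Module.finrank ℝ ↥(W1 ⊓ W2) := by omega
  have hne : W1 ⊓ W2 ≠ ⊥ := by
    intro h
    rw [h, finrank_bot] at hinf
    exact lt_irrefl 0 hinf
  obtain ⟨v, hv, hv0⟩ := Submodule.exists_mem_ne_zero_of_ne_bot hne
  rw [Submodule.mem_inf] at hv
  obtain ⟨hv1, hv2⟩ := hv
  obtain ⟨c, hc⟩ := (Submodule.mem_span_range_iff_exists_fun ℝ).mp hv1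
  have hker : A₀ᵀ *ᵥ v = 0 := hv2
  have hvk : ∀ k, v k = ∑ j, c j * U k (g j) := by
    intro k
    rw [← congrFun hc k, Finset.sum_apply]
    apply Finset.sum_congr rfl; intro j _
    simp [hf]
  have hvdot : ∀ j₀, ∑ k, v k * U k (g j₀) = c j₀ := by
    intro j₀
    simp_rw [hvk]
    exact sumdot c j₀
  -- norm of v
  have hvv : ∑ k, (v k)^2 = ∑ j, (c j)^2 := by
    have : ∑ k, (v k)^2 = ∑ k, (∑ j, c j * U k (g j)) * v k := by
      apply Finset.sum_congr rfl; intro k _; rw [← hvk, sq]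
    rw [this]
    simp_rw [Finset.sum_mul]
    rw [Finset.sum_comm]
    apply Finset.sum_congr rfl; intro j _
    have : ∑ k, c j * U k (g j) * v k = c j * ∑ k, v k * U k (g j) := by
      rw [Finset.mul_sum]; apply Finset.sum_congr rfl; intro k _; ring
    rw [this, hvdot, sq]
  -- quadratic form
  have hSv : ∀ k, (Shat *ᵥ v) k = ∑ j, (lam (g j) * U k (g j)) * c j := by
    intro k
    show ∑ m, Shat k m * v m = _
    have hvk' : ∀ m, v m = ∑ j, U m (g j) * c j := by
      intro m; rw [hvk]; apply Finset.sum_congr rfl; intro j _; ring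
    simp_rw [hvk']
    rw [swap_dot (fun m => Shat k m) c (fun m j => U m (g j))]
    apply Finset.sum_congr rfl; intro j _
    congr 1
    have he := congrFun (eigencol U lam Shat hU hdecomp (g j)) k
    rw [← he]
    show ∑ m, U m (g j) * Shat k m = ∑ m, Shat k m * U m (g j)
    apply Finset.sum_congr rfl; intro m _; ring
  have hquad : ∑ k, v k * (Shat *ᵥ v) k = ∑ j, (c j)^2 * lam (g j) := by
    simp_rw [hSv]
    rw [swap_dot v c (fun k j => lam (g j) * U k (g j))]
    apply Finset.sum_congr rfl; intro j _
    have h5 : ∑ k, (lam (g j) * U k (g j)) * v k = lam (g j) * c j := by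
      rw [← hvdot j, Finset.mul_sum]
      apply Finset.sum_congr rfl; intro k _; ring
    rw [h5]; ring
  have hlow : lam ⟨d₀, hdp'⟩ * ∑ j, (c j)^2 ≤ ∑ j, (c j)^2 * lam (g j) := by
    rw [Finset.mul_sum]
    apply Finset.sum_le_sum; intro j _
    have hle : (g j) ≤ (⟨d₀, hdp'⟩ : Fin p) := by
      rw [Fin.le_def]
      exact Nat.lt_succ_iff.mp j.isLt
    have h6 := hlam hle
    nlinarith [sq_nonneg (c j)]
  have hproj : ∑ k, v k * ((A₀ * A₀ᵀ) *ᵥ v) k = 0 := by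
    rw [quad_proj, hker]
    simp
  have hSsplit : Shat = E + A₀ * A₀ᵀ := by rw [hE, sub_add_cancel]
  have hsplit : ∑ k, v k * (Shat *ᵥ v) k
      = ∑ k, v k * (E *ᵥ v) k + ∑ k, v k * ((A₀ * A₀ᵀ) *ᵥ v) k := by
    rw [← Finset.sum_add_distrib]
    apply Finset.sum_congr rfl; intro k _
    rw [hSsplit, Matrix.add_mulVec, Pi.add_apply, mul_add]
  have hEbound := inner_mulVec_le E v
  have hSpos : 0 < ∑ j, (c j)^2 := by
    rw [← hvv]
    have hk : ∃ k, v k ≠ 0 := by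
      by_contra h
      push_neg at h
      exact hv0 (funext h)
    obtain ⟨k, hk⟩ := hk
    apply Finset.sum_pos' (fun i _ => sq_nonneg _)
    exact ⟨k, Finset.mem_univ k, pow_two_pos_of_ne_zero hk⟩
  have habs := (abs_le.mp hEbound).2
  rw [hvv] at habs
  have hfinal : lam ⟨d₀, hdp'⟩ * ∑ j, (c j)^2 ≤ ε * ∑ j, (c j)^2 := by
    calc lam ⟨d₀, hdp'⟩ * ∑ j, (c j)^2 ≤ ∑ j, (c j)^2 * lam (g j) := hlow
      _ = ∑ k, v k * (Shat *ᵥ v) k := hquad.symm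
      _ = ∑ k, v k * (E *ᵥ v) k + 0 := by rw [hsplit, hproj]
      _ = ∑ k, v k * (E *ᵥ v) k := by ring
      _ ≤ ε * ∑ j, (c j)^2 := habs
  exact le_of_mul_le_mul_right (by linarith) hSpos


lemma col_mul {p q d : ℕ} (X : Matrix (Fin p) (Fin q) ℝ) (Y : Matrix (Fin q) (Fin d) ℝ)
    (j : Fin d) : (fun i => (X * Y) i j) = X *ᵥ (fun k => Y k j) := by
  funext i
  rw [Matrix.mul_apply]
  rfl

lemma frobSq_le_of_cols {p d : ℕ} (M : Matrix (Fin p) (Fin d) ℝ) (b : ℝ)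
    (h : ∀ j, ∑ i, (M i j)^2 ≤ b) : frobSq M ≤ d * b := by
  have : frobSq M = ∑ j, ∑ i, (M i j)^2 := Finset.sum_comm
  rw [this]
  calc ∑ j : Fin d, ∑ i, (M i j)^2 ≤ ∑ _j : Fin d, b := Finset.sum_le_sum (fun j _ => h j)
    _ = d * b := by rw [Finset.sum_const, Finset.card_univ, Fintype.card_fin, nsmul_eq_mul]

lemma lam_ge {p d₀ : ℕ} (A₀ : Matrix (Fin p) (Fin d₀) ℝ)
    (Shat U : Matrix (Fin p) (Fin p) ℝ) (lam : Fin p → ℝ)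
    (hU : Uᵀ * U = 1) (hdecomp : Shat = U * Matrix.diagonal lam * Uᵀ) (i : Fin p) :
    -opNorm (Shat - A₀ * A₀ᵀ) ≤ lam i := by
  set E := Shat - A₀ * A₀ᵀ with hE
  have hnorm : ∑ k, (U k i)^2 = 1 := by
    have h0 := dotcol U hU i i
    rw [if_pos rfl] at h0
    rw [← h0]
    apply Finset.sum_congr rfl; intro k _
    rw [sq]
  have h1 : ∑ k, U k i * (Shat *ᵥ (fun k' => U k' i)) k = lam i := by
    rw [eigencol U lam Shat hU hdecomp i]
    have h2 : ∀ k, U k i * (lam i * U k i) = lam i * (U k i)^2 := fun k => by ring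
    simp_rw [h2]
    rw [← Finset.mul_sum, hnorm, mul_one]
  have hsplit : Shat = E + A₀ * A₀ᵀ := by rw [hE, sub_add_cancel]
  have h2 : ∑ k, U k i * (Shat *ᵥ (fun k' => U k' i)) k
      = ∑ k, U k i * (E *ᵥ (fun k' => U k' i)) k
        + ∑ k, U k i * ((A₀ * A₀ᵀ) *ᵥ (fun k' => U k' i)) k := by
    rw [← Finset.sum_add_distrib]
    apply Finset.sum_congr rfl; intro k _
    rw [hsplit, Matrix.add_mulVec, Pi.add_apply, mul_add]
  have h3 : 0 ≤ ∑ k, U k i * ((A₀ * A₀ᵀ) *ᵥ (fun k' => U k' i)) k := by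
    rw [quad_proj]
    positivity
  have h4 := (abs_le.mp (inner_mulVec_le E (fun k' => U k' i))).1
  rw [hnorm, mul_one] at h4
  linarith

/-- a Davis–Kahan bound: let `A₀ ∈ 𝒜_{p×d₀}`, let `Shat` be a real symmetric
`p × p` matrix, and let `Â ∈ 𝒜_{p×d₀}` have as columns orthonormal eigenvectors of `Shat`
for its `d₀` largest eigenvalues counted with multiplicity (expressed via an orthogonal `U`
and a nonincreasing `lam` with `Shat = U diagonal(lam) Uᵀ`, `Â` being the first `d₀`
columns of `U`). Then `d_F(𝒮(Â), 𝒮(A₀)) ≤ 2 √d₀ ‖Shat − A₀ A₀ᵀ‖_op`. -/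
theorem stmt14 (p d₀ : ℕ) (hp : 0 < p) (hd₀ : 0 < d₀) (hdp : d₀ ≤ p)
    (A₀ : Matrix (Fin p) (Fin d₀) ℝ) (hA₀ : A₀ᵀ * A₀ = 1)
    (Shat : Matrix (Fin p) (Fin p) ℝ) (hShat : Shatᵀ = Shat)
    (Ahat : Matrix (Fin p) (Fin d₀) ℝ)
    (U : Matrix (Fin p) (Fin p) ℝ) (lam : Fin p → ℝ)
    (hU : Uᵀ * U = 1) (hlam : Antitone lam)
    (hdecomp : Shat = U * Matrix.diagonal lam * Uᵀ)
    (hAhat : ∀ i j, Ahat i j = U i (Fin.castLE hdp j)) :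
    dF Ahat A₀ ≤ 2 * Real.sqrt d₀ * opNorm (Shat - A₀ * A₀ᵀ) := by
  set E := Shat - A₀ * A₀ᵀ with hE
  set ε := opNorm E with hεdef
  have hεnn : 0 ≤ ε := norm_nonneg _
  have hUU : U * Uᵀ = 1 := mul_eq_one_comm.mp hU
  have hUt : (Uᵀ)ᵀ * Uᵀ = 1 := by rw [transpose_transpose]; exact hUU
  have hhat : Ahatᵀ * Ahat = 1 := by
    ext j k
    rw [Matrix.mul_apply, Matrix.one_apply]
    have h0 : ∀ i, Ahatᵀ j i * Ahat i k = U i (Fin.castLE hdp j) * U i (Fin.castLE hdp k) := by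
      intro i; rw [Matrix.transpose_apply, hAhat, hAhat]
    rw [Finset.sum_congr rfl (fun i _ => h0 i), dotcol U hU]
    by_cases h : j = k
    · simp [h]
    · rw [if_neg (fun hh => h (Fin.castLE_injective hdp hh)), if_neg h]
  have hcolA : ∀ j, ∑ i, (A₀ i j)^2 = 1 := by
    intro j
    have h0 := congrFun (congrFun hA₀ j) j
    rw [Matrix.mul_apply, Matrix.one_apply_eq] at h0
    rw [← h0]
    apply Finset.sum_congr rfl; intro i _
    rw [Matrix.transpose_apply, sq]
  have hdF : dF Ahat A₀ = Real.sqrt (frobSq (A₀ - Ahat * (Ahatᵀ * A₀))) := by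
    unfold dF
    rw [half_frob A₀ Ahat hA₀ hhat]
  set C := (1 - Ahat * Ahatᵀ) * (Shat * A₀) with hC
  set D := (1 - Ahat * Ahatᵀ) * (E * A₀) with hD
  have hBd : A₀ - Ahat * (Ahatᵀ * A₀) = C - D := by
    rw [hC, hD, ← Matrix.mul_sub]
    have h1 : Shat * A₀ - E * A₀ = A₀ * (A₀ᵀ * A₀) := by
      rw [hE, Matrix.sub_mul, Matrix.mul_assoc, sub_sub_cancel]
    rw [h1, hA₀, Matrix.mul_one, Matrix.sub_mul, Matrix.one_mul, Matrix.mul_assoc]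
  -- eigenvalue bounds
  have hlam2 : ∀ m : Fin p, d₀ ≤ (m:ℕ) → (lam m)^2 ≤ ε^2 := by
    intro m hm
    have hdp' : d₀ < p := lt_of_le_of_lt hm m.isLt
    have hle : (⟨d₀, hdp'⟩ : Fin p) ≤ m := by rw [Fin.le_def]; exact hm
    have hup : lam m ≤ ε := le_trans (hlam hle) (lam_d0_le hdp' A₀ Shat U lam hU hlam hdecomp)
    have hlo := lam_ge A₀ Shat U lam hU hdecomp m
    exact sq_le_sq' hlo hup
  -- column bound for D
  have hDcol : ∀ j, ∑ i, (D i j)^2 ≤ ε^2 := by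
    intro j
    have hcol : (fun i => D i j) = (1 - Ahat * Ahatᵀ) *ᵥ (E *ᵥ (fun k => A₀ k j)) := by
      rw [hD, col_mul, col_mul E A₀ j]
    calc ∑ i, (D i j)^2 = ∑ i, (((1 - Ahat * Ahatᵀ) *ᵥ (E *ᵥ (fun k => A₀ k j))) i)^2 := by
          apply Finset.sum_congr rfl; intro i _; rw [← hcol]
      _ ≤ ∑ i, ((E *ᵥ (fun k => A₀ k j)) i)^2 := contraction Ahat hhat _
      _ ≤ (opNorm E)^2 * ∑ i, (A₀ i j)^2 := mulVec_sq_le E _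
      _ = ε^2 := by rw [hcolA j, mul_one]
  -- column bound for C
  have hCcol : ∀ j, ∑ i, (C i j)^2 ≤ ε^2 := by
    intro j
    set a : Fin p → ℝ := fun k => A₀ k j with ha
    set w : Fin p → ℝ := Uᵀ *ᵥ a with hw
    set z : Fin p → ℝ := fun m => lam m * w m with hz
    have claim0 : Shat *ᵥ a = U *ᵥ z := by
      rw [hdecomp, ← Matrix.mulVec_mulVec, ← Matrix.mulVec_mulVec]
      have hdz : Matrix.diagonal lam *ᵥ w = z := by
        funext m
        rw [Matrix.mulVec_diagonal]
      rw [hdz]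
    have claim1 : Ahatᵀ *ᵥ (U *ᵥ z) = fun j' => z (Fin.castLE hdp j') := by
      funext j'
      show ∑ k, Ahatᵀ j' k * (U *ᵥ z) k = _
      have h0 : ∀ k, Ahatᵀ j' k * (U *ᵥ z) k = Uᵀ (Fin.castLE hdp j') k * (U *ᵥ z) k := by
        intro k
        rw [Matrix.transpose_apply, Matrix.transpose_apply, hAhat]
      rw [Finset.sum_congr rfl (fun k _ => h0 k)]
      show (Uᵀ *ᵥ (U *ᵥ z)) (Fin.castLE hdp j') = _
      rw [Matrix.mulVec_mulVec, hU, Matrix.one_mulVec]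
    have claim2 : (1 - Ahat * Ahatᵀ) *ᵥ (U *ᵥ z)
        = U *ᵥ (fun m => if (m:ℕ) < d₀ then 0 else z m) := by
      funext i
      rw [Matrix.sub_mulVec, Matrix.one_mulVec, Pi.sub_apply, ← Matrix.mulVec_mulVec, claim1]
      have e1 : (Ahat *ᵥ fun j' => z (Fin.castLE hdp j')) i
          = ∑ m : Fin p, (if (m:ℕ) < d₀ then U i m * z m else 0) := by
        rw [sum_fin_lt hdp (fun m => U i m * z m)]
        show ∑ j', Ahat i j' * z (Fin.castLE hdp j') = _
        apply Finset.sum_congr rfl; intro j' _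
        rw [hAhat]
      rw [e1]
      show ∑ m, U i m * z m - _ = ∑ m, U i m * (if (m:ℕ) < d₀ then 0 else z m)
      rw [← Finset.sum_sub_distrib]
      apply Finset.sum_congr rfl; intro m _
      by_cases h : (m:ℕ) < d₀ <;> simp [h]
    have hcol : (fun i => C i j) = (1 - Ahat * Ahatᵀ) *ᵥ (Shat *ᵥ a) := by
      rw [hC, col_mul, col_mul Shat A₀ j]
    calc ∑ i, (C i j)^2
        = ∑ i, ((U *ᵥ (fun m => if (m:ℕ) < d₀ then 0 else z m)) i)^2 := by
          apply Finset.sum_congr rfl; intro i _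
          rw [show C i j = ((1 - Ahat * Ahatᵀ) *ᵥ (Shat *ᵥ a)) i from congrFun hcol i,
            claim0, claim2]
      _ = ∑ m : Fin p, ((if (m:ℕ) < d₀ then 0 else z m))^2 := orth_pres U hU _
      _ ≤ ∑ m : Fin p, ε^2 * (w m)^2 := by
          apply Finset.sum_le_sum
          intro m _
          by_cases h : (m:ℕ) < d₀
          · rw [if_pos h]
            rw [show ((0:ℝ))^2 = 0 by norm_num]
            positivity
          · rw [if_neg h, hz]
            have h2 := hlam2 m (le_of_not_gt h)
            calc (lam m * w m)^2 = (lam m)^2 * (w m)^2 := by ring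
              _ ≤ ε^2 * (w m)^2 := mul_le_mul_of_nonneg_right h2 (sq_nonneg _)
      _ = ε^2 * ∑ m : Fin p, (w m)^2 := by rw [Finset.mul_sum]
      _ = ε^2 * ∑ i, (a i)^2 := by rw [hw, orth_pres Uᵀ hUt a]
      _ = ε^2 := by
          rw [ha]
          show ε^2 * ∑ i, (A₀ i j)^2 = ε^2
          rw [hcolA j, mul_one]
  -- assemble
  have hfC : frobSq C ≤ d₀ * ε^2 := frobSq_le_of_cols C (ε^2) hCcol
  have hfD : frobSq D ≤ d₀ * ε^2 := frobSq_le_of_cols D (ε^2) hDcol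
  have hsq : Real.sqrt ((d₀:ℝ) * ε^2) = Real.sqrt d₀ * ε := by
    rw [Real.sqrt_mul (by positivity), Real.sqrt_sq hεnn]
  have h2 : Real.sqrt (frobSq C) ≤ Real.sqrt d₀ * ε := by
    rw [← hsq]; exact Real.sqrt_le_sqrt hfC
  have h3 : Real.sqrt (frobSq D) ≤ Real.sqrt d₀ * ε := by
    rw [← hsq]; exact Real.sqrt_le_sqrt hfD
  rw [hdF, hBd]
  calc Real.sqrt (frobSq (C - D)) ≤ Real.sqrt (frobSq C) + Real.sqrt (frobSq D) :=
        frob_triangle C D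
    _ ≤ Real.sqrt d₀ * ε + Real.sqrt d₀ * ε := add_le_add h2 h3
    _ = 2 * Real.sqrt d₀ * ε := by ring
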